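/- Minimax characterization of commuting rates: for an ergodic finite Markov chain with Laplacian Δ, bilinear form L(φ,ψ) = φ^⊤Δψ, and distinct states a, b, the commuting rate r_{ab} = 1/T_{ab} satisfies r_{ab} = min over α with α_a=1, α_b=0 of max over pairs (φ,ψ) with φ_a=ψ_a=1, φ_b=ψ_b=0 and φ+ψ=2α of L(φ,ψ). -/

import Mathlib

/-!
Write `Δ = diag(w) (1 - P)`. For the column `m c = (i ↦ M i c)` of expected hitting times, the
recursion for `M` gives `(Δ m c) i = w i` for `i ≠ c`, and `1ᵀ Δ = 0` forces `Δ m c = w - δ_c`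
(Kac's formula). Hence `ψ = m b - m a` solves `Δ ψ = δ_a - δ_b` with `ψ a - ψ b = T a b`.

Since `2 fᵀ Δ f = ∑ w_i P_ij (f_i - f_j)²`, the form `L f f` is nonnegative and vanishes only if
`P f = f`; in particular `T a b = L ψ ψ ≠ 0`. By ergodicity the left kernel of `Δ` is the
constants, so `δ_a - δ_b = φᵀ Δ` for some `φ`, and pairing with `ψ` gives `φ a - φ b = T a b`.
After normalisation, `L f ψ̄ = L φ̄ f = r (f a - f b)` with `r = 1 / T a b`. For every `α` the
pair `(2α - ψ̄, ψ̄)` has value `r`; for `α = (φ̄ + ψ̄) / 2` every admissible pair is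
`(φ̄ + h, ψ̄ - h)` with `h a = h b = 0`, of value `r - L h h ≤ r`.
-/

open Matrix Finset

variable {ι : Type*} [Fintype ι]

lemma eq_of_mulVec_eq_self_of_pos {Q : Matrix ι ι ℝ} (hQ : ∀ i j, 0 < Q i j) (hQ1 : Q *ᵥ 1 = 1)
    {x : ι → ℝ} (hx : Q *ᵥ x = x) (i j : ι) : x i = x j := by
  obtain ⟨k, -, hk⟩ := exists_max_image univ x ⟨i, mem_univ i⟩
  have hsum : ∑ l, Q k l * (x k - x l) = 0 := by
    have h1 : ∑ l, Q k l = 1 := by simpa [mulVec, dotProduct] using congrFun hQ1 k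
    have h2 : ∑ l, Q k l * x l = x k := congrFun hx k
    simp only [mul_sub, sum_sub_distrib, ← sum_mul, h1, h2, one_mul, sub_self]
  have hmax : ∀ l, x l = x k := fun l => by
    have h := (sum_eq_zero_iff_of_nonneg fun l _ =>
      mul_nonneg (hQ k l).le (sub_nonneg.2 (hk l (mem_univ l)))).1 hsum l (mem_univ l)
    linarith [(mul_eq_zero.1 h).resolve_left (hQ k l).ne']
  rw [hmax i, hmax j]

lemma exists_normalized_mulVec_eq {A : Matrix ι ι ℝ} (hA1 : A *ᵥ 1 = 0) {m y : ι → ℝ}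
    (hm : A *ᵥ m = y) {a b : ι} (hm0 : m a - m b ≠ 0) :
    ∃ ψ : ι → ℝ, ψ a = 1 ∧ ψ b = 0 ∧ A *ᵥ ψ = (m a - m b)⁻¹ • y := by
  refine ⟨(m a - m b)⁻¹ • (m - m b • 1), ?_, ?_, ?_⟩
  · simp [inv_mul_cancel₀ hm0]
  · simp
  · rw [mulVec_smul, mulVec_sub, mulVec_smul, hA1, smul_zero, sub_zero, hm]

variable [DecidableEq ι]

lemma pow_mulVec_eq_self {P : Matrix ι ι ℝ} {x : ι → ℝ} (hx : P *ᵥ x = x) (k : ℕ) :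
    (P ^ k) *ᵥ x = x := by
  induction k with
  | zero => rw [pow_zero, one_mulVec]
  | succ k ih => rw [pow_succ, ← mulVec_mulVec, hx, ih]

lemma exists_vecMul_eq_of_sum_eq_zero [Nonempty ι] {A : Matrix ι ι ℝ} (hA1 : A *ᵥ 1 = 0)
    (hker : ∀ x, x ᵥ* A = 0 → ∀ i j, x i = x j) {y : ι → ℝ} (hy : ∑ i, y i = 0) :
    ∃ x, x ᵥ* A = y := by
  let s : (ι → ℝ) →ₗ[ℝ] ℝ := Fintype.linearCombination ℝ 1
  have hs : ∀ v, s v = ∑ i, v i := fun v => by simp [s, Fintype.linearCombination_apply]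
  have hrange : LinearMap.range (vecMulLinear A) ≤ LinearMap.ker s := by
    rintro _ ⟨x, rfl⟩
    rw [LinearMap.mem_ker, hs, vecMulLinear_apply, ← dotProduct_one, ← dotProduct_mulVec, hA1,
      dotProduct_zero]
  have hker_le : LinearMap.ker (vecMulLinear A) ≤ Submodule.span ℝ {1} := fun x hx => by
    obtain ⟨i₀⟩ := ‹Nonempty ι›
    refine Submodule.mem_span_singleton.2 ⟨x i₀, funext fun i => ?_⟩
    simp [hker x hx i₀ i]
  have hs_surj : LinearMap.range s = ⊤ := by
    obtain ⟨i₀⟩ := ‹Nonempty ι›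
    refine LinearMap.range_eq_top.2 fun c => ⟨Pi.single i₀ c, ?_⟩
    simp [hs]
  have hdimA := LinearMap.finrank_range_add_finrank_ker (vecMulLinear A)
  have hdims := LinearMap.finrank_range_add_finrank_ker s
  have hker_dim := (Submodule.finrank_mono hker_le).trans
    (finrank_span_singleton (one_ne_zero (α := ι → ℝ))).le
  rw [hs_surj, finrank_top, Module.finrank_self] at hdims
  have heq := Submodule.eq_of_le_of_finrank_le hrange (by omega)
  obtain ⟨x, hx⟩ : y ∈ LinearMap.range (vecMulLinear A) := by rw [heq, LinearMap.mem_ker, hs, hy]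
  exact ⟨x, hx⟩

lemma dotProduct_single_sub_single (f : ι → ℝ) (a b : ι) :
    f ⬝ᵥ (Pi.single a 1 - Pi.single b 1) = f a - f b := by
  rw [dotProduct_sub, dotProduct_single, dotProduct_single, mul_one, mul_one]

lemma isLeast_minimax_of_vecMul_eq_of_mulVec_eq {A : Matrix ι ι ℝ} (hA : ∀ f, 0 ≤ f ⬝ᵥ A *ᵥ f)
    {a b : ι} {r : ℝ} {φ₀ ψ₀ : ι → ℝ} (hφa : φ₀ a = 1) (hφb : φ₀ b = 0) (hψa : ψ₀ a = 1)
    (hψb : ψ₀ b = 0)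
    (hφ : φ₀ ᵥ* A = r • (Pi.single a 1 - Pi.single b 1))
    (hψ : A *ᵥ ψ₀ = r • (Pi.single a 1 - Pi.single b 1)) :
    IsLeast
      { v : ℝ | ∃ α : ι → ℝ, α a = 1 ∧ α b = 0 ∧
          IsGreatest
            { x : ℝ | ∃ φ ψ : ι → ℝ,
                φ a = 1 ∧ φ b = 0 ∧ ψ a = 1 ∧ ψ b = 0 ∧
                φ + ψ = (2 : ℝ) • α ∧ x = φ ⬝ᵥ A *ᵥ ψ } v }
      r := by
  have hpair : ∀ f : ι → ℝ, f ⬝ᵥ r • (Pi.single a 1 - Pi.single b 1) = r * (f a - f b) :=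
    fun f => by rw [dotProduct_smul, dotProduct_single_sub_single, smul_eq_mul]
  have hLψ : ∀ f, f ⬝ᵥ A *ᵥ ψ₀ = r * (f a - f b) := fun f => by rw [hψ, hpair]
  have hLφ : ∀ f, φ₀ ⬝ᵥ A *ᵥ f = r * (f a - f b) := fun f => by
    rw [dotProduct_mulVec, hφ, dotProduct_comm, hpair]
  refine ⟨⟨(2 : ℝ)⁻¹ • (φ₀ + ψ₀), ?_, ?_, ⟨φ₀, ψ₀, hφa, hφb, hψa, hψb, ?_, ?_⟩, ?_⟩, ?_⟩
  · norm_num [hφa, hψa]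
  · simp [hφb, hψb]
  · rw [smul_inv_smul₀ two_ne_zero]
  · rw [hLψ, hφa, hφb, sub_zero, mul_one]
  · rintro _ ⟨φ, ψ, hφa', hφb', -, -, hsum, rfl⟩
    rw [smul_inv_smul₀ two_ne_zero] at hsum
    set h := φ - φ₀
    have hφ' : φ = φ₀ + h := by simp [h]
    have hψ' : ψ = ψ₀ - h := by simp only [h]; linear_combination hsum
    have hha : h a = 0 := by simp [h, hφa, hφa']
    have hhb : h b = 0 := by simp [h, hφb, hφb']
    have := hA h
    rw [hφ', hψ', add_dotProduct, mulVec_sub, dotProduct_sub, dotProduct_sub, hLψ, hLφ, hLψ, hha,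
      hhb, hφa, hφb]
    linarith
  · rintro v ⟨α, hαa, hαb, -, hv⟩
    refine hv ⟨(2 : ℝ) • α - ψ₀, ψ₀, ?_, ?_, hψa, hψb, sub_add_cancel _ _, ?_⟩
    · norm_num [hαa, hψa]
    · norm_num [hαb, hψb]
    · rw [hLψ]; norm_num [hαa, hαb, hψa, hψb]

def markovLaplacian (w : ι → ℝ) (P : Matrix ι ι ℝ) : Matrix ι ι ℝ := diagonal w * (1 - P)

section MarkovLaplacian

variable {w : ι → ℝ} {P : Matrix ι ι ℝ}

lemma markovLaplacian_mulVec (x : ι → ℝ) :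
    markovLaplacian w P *ᵥ x = w * (x - P *ᵥ x) := by
  ext i
  rw [markovLaplacian, ← mulVec_mulVec, sub_mulVec, one_mulVec, mulVec_diagonal, Pi.mul_apply]

lemma markovLaplacian_mulVec_one (hP1 : P *ᵥ 1 = 1) : markovLaplacian w P *ᵥ 1 = 0 := by
  rw [markovLaplacian_mulVec, hP1, sub_self, mul_zero]

lemma one_vecMul_markovLaplacian (hwP : w ᵥ* P = w) : 1 ᵥ* markovLaplacian w P = 0 := by
  have hw : 1 ᵥ* diagonal w = w := by ext; simp [vecMul_diagonal]
  rw [markovLaplacian, mul_sub, mul_one, vecMul_sub, ← vecMul_vecMul, hw, hwP, sub_self]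

lemma two_mul_dotProduct_markovLaplacian_mulVec (hP1 : P *ᵥ 1 = 1) (hwP : w ᵥ* P = w)
    (x : ι → ℝ) :
    2 * (x ⬝ᵥ markovLaplacian w P *ᵥ x) = ∑ i, ∑ j, w i * P i j * (x i - x j) ^ 2 := by
  have hrow : ∀ i, ∑ j, P i j = 1 := fun i => by simpa [mulVec, dotProduct] using congrFun hP1 i
  have hcol : ∀ j, ∑ i, w i * P i j = w j := fun j => by
    simpa [vecMul, dotProduct] using congrFun hwP j
  have hquad : x ⬝ᵥ markovLaplacian w P *ᵥ x
      = ∑ i, w i * x i ^ 2 - ∑ i, ∑ j, w i * x i * (P i j * x j) := by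
    rw [markovLaplacian_mulVec]
    simp only [dotProduct, mulVec, Pi.mul_apply, Pi.sub_apply, mul_sub, sum_sub_distrib, mul_sum]
    congr 1
    · exact sum_congr rfl fun i _ => by ring
    · exact sum_congr rfl fun i _ => sum_congr rfl fun j _ => by ring
  have hsq : ∀ i j, w i * P i j * (x i - x j) ^ 2
      = P i j * (w i * x i ^ 2) + w i * P i j * x j ^ 2 - 2 * (w i * x i * (P i j * x j)) := by
    intro i j; ring
  simp only [hquad, hsq, sum_add_distrib, sum_sub_distrib, ← sum_mul, ← mul_sum, hrow, one_mul]
  rw [sum_comm (f := fun i j => w i * P i j * x j ^ 2)]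
  simp only [← sum_mul, hcol]
  ring

lemma dotProduct_markovLaplacian_mulVec_nonneg (hP0 : ∀ i j, 0 ≤ P i j) (hw : ∀ i, 0 ≤ w i)
    (hP1 : P *ᵥ 1 = 1) (hwP : w ᵥ* P = w) (x : ι → ℝ) :
    0 ≤ x ⬝ᵥ markovLaplacian w P *ᵥ x := by
  have hsum := two_mul_dotProduct_markovLaplacian_mulVec hP1 hwP x
  have hnn : 0 ≤ ∑ i, ∑ j, w i * P i j * (x i - x j) ^ 2 :=
    sum_nonneg fun i _ => sum_nonneg fun j _ =>
      mul_nonneg (mul_nonneg (hw i) (hP0 i j)) (sq_nonneg _)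
  linarith

lemma mulVec_eq_self_of_dotProduct_markovLaplacian_mulVec_eq_zero (hP0 : ∀ i j, 0 ≤ P i j)
    (hw : ∀ i, 0 < w i) (hP1 : P *ᵥ 1 = 1) (hwP : w ᵥ* P = w) {x : ι → ℝ}
    (hx : x ⬝ᵥ markovLaplacian w P *ᵥ x = 0) : P *ᵥ x = x := by
  have hsum := two_mul_dotProduct_markovLaplacian_mulVec hP1 hwP x
  rw [hx, mul_zero, eq_comm] at hsum
  have hnn : ∀ i j, 0 ≤ w i * P i j * (x i - x j) ^ 2 := fun i j =>
    mul_nonneg (mul_nonneg (hw i).le (hP0 i j)) (sq_nonneg _)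
  have hterm : ∀ i j, P i j * x j = P i j * x i := by
    intro i j
    have h := (sum_eq_zero_iff_of_nonneg fun i _ => sum_nonneg fun j _ => hnn i j).1 hsum i
      (mem_univ i)
    rcases mul_eq_zero.1 ((sum_eq_zero_iff_of_nonneg fun j _ => hnn i j).1 h j (mem_univ j))
      with h | h
    · rw [(mul_eq_zero.1 h).resolve_left (hw i).ne', zero_mul, zero_mul]
    · rw [sub_eq_zero.1 (pow_eq_zero_iff two_ne_zero |>.1 h)]
  ext i
  have hrow : ∑ j, P i j = 1 := by simpa [mulVec, dotProduct] using congrFun hP1 i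
  simp only [mulVec, dotProduct, hterm i, ← sum_mul, hrow, one_mul]

lemma markovLaplacian_mulVec_eq_of_hittingTime (hw1 : ∑ i, w i = 1) (hwP : w ᵥ* P = w)
    {m : ι → ℝ} {c : ι} (hm : ∀ i, i ≠ c → m i = 1 + (P *ᵥ m) i) :
    markovLaplacian w P *ᵥ m = w - Pi.single c 1 := by
  set v := markovLaplacian w P *ᵥ m
  have hoff : ∀ i, i ≠ c → v i = w i := fun i hi => by
    simp only [v, markovLaplacian_mulVec, Pi.mul_apply, Pi.sub_apply]
    rw [hm i hi]; ring
  have hv : ∑ i, v i = 0 := by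
    have := dotProduct_mulVec 1 (markovLaplacian w P) m
    rwa [one_vecMul_markovLaplacian hwP, zero_dotProduct, one_dotProduct] at this
  rw [← add_sum_erase _ _ (mem_univ c), sum_congr rfl fun i hi => hoff i (ne_of_mem_erase hi)]
    at hv
  rw [← add_sum_erase _ _ (mem_univ c)] at hw1
  ext i
  by_cases hi : i = c
  · subst hi
    rw [Pi.sub_apply, Pi.single_eq_same]
    linarith
  · simp [hoff i hi, hi]

lemma markovLaplacian_mulVec_hittingTime_sub (hw1 : ∑ i, w i = 1) (hwP : w ᵥ* P = w)
    {M : ι → ι → ℝ} (hM : ∀ i c, i ≠ c → M i c = 1 + ∑ j, P i j * M j c) (a b : ι) :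
    markovLaplacian w P *ᵥ (fun i => M i b - M i a) = Pi.single a 1 - Pi.single b 1 := by
  rw [show (fun i => M i b - M i a) = (fun i => M i b) - fun i => M i a from rfl, mulVec_sub,
    markovLaplacian_mulVec_eq_of_hittingTime hw1 hwP fun i hi => hM i b hi,
    markovLaplacian_mulVec_eq_of_hittingTime hw1 hwP fun i hi => hM i a hi,
    sub_sub_sub_cancel_left]

lemma sub_ne_zero_of_markovLaplacian_mulVec_eq (hP0 : ∀ i j, 0 ≤ P i j) (hw : ∀ i, 0 < w i)
    (hP1 : P *ᵥ 1 = 1) (hwP : w ᵥ* P = w) {a b : ι} (hab : a ≠ b) {m : ι → ℝ}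
    (hm : markovLaplacian w P *ᵥ m = Pi.single a 1 - Pi.single b 1) : m a - m b ≠ 0 := by
  intro h
  have hquad : m ⬝ᵥ markovLaplacian w P *ᵥ m = 0 := by rw [hm, dotProduct_single_sub_single, h]
  have he : (Pi.single a 1 - Pi.single b 1 : ι → ℝ) = 0 := by
    rw [← hm, markovLaplacian_mulVec,
      mulVec_eq_self_of_dotProduct_markovLaplacian_mulVec_eq_zero hP0 hw hP1 hwP hquad,
      sub_self, mul_zero]
  simpa [hab] using congrFun he a

lemma eq_of_vecMul_markovLaplacian_eq_zero (hP0 : ∀ i j, 0 ≤ P i j) (hP1 : P *ᵥ 1 = 1)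
    (herg : ∃ k : ℕ, ∀ i j, 0 < (P ^ k) i j) (hw : ∀ i, 0 < w i) (hwP : w ᵥ* P = w)
    {x : ι → ℝ} (hx : x ᵥ* markovLaplacian w P = 0) (i j : ι) : x i = x j := by
  obtain ⟨k, hk⟩ := herg
  have hquad : x ⬝ᵥ markovLaplacian w P *ᵥ x = 0 := by
    rw [dotProduct_mulVec, hx, zero_dotProduct]
  have hharm := mulVec_eq_self_of_dotProduct_markovLaplacian_mulVec_eq_zero hP0 hw hP1 hwP hquad
  exact eq_of_mulVec_eq_self_of_pos hk (pow_mulVec_eq_self hP1 k) (pow_mulVec_eq_self hharm k) i j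

lemma exists_vecMul_markovLaplacian_eq [Nonempty ι] (hP0 : ∀ i j, 0 ≤ P i j)
    (hP1 : P *ᵥ 1 = 1) (herg : ∃ k : ℕ, ∀ i j, 0 < (P ^ k) i j) (hw : ∀ i, 0 < w i)
    (hwP : w ᵥ* P = w) {y : ι → ℝ} (hy : ∑ i, y i = 0) : ∃ x, x ᵥ* markovLaplacian w P = y :=
  exists_vecMul_eq_of_sum_eq_zero (markovLaplacian_mulVec_one hP1)
    (fun _ hx => eq_of_vecMul_markovLaplacian_eq_zero hP0 hP1 herg hw hwP hx) hy

end MarkovLaplacian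

/-- Minimax characterization of the commuting rate: for distinct states
`a ≠ b`, `1 / T a b` is the least value, over `α` with `α a = 1, α b = 0`,
of the greatest value of `L φ ψ` over pairs `(φ, ψ)` with boundary values
`1` at `a`, `0` at `b`, and `φ + ψ = 2 α`. -/
theorem commute_rate_minimax {n : ℕ}
    (P : Matrix (Fin n) (Fin n) ℝ)
    (hP0 : ∀ i j, 0 ≤ P i j) (hP1 : ∀ i, ∑ j, P i j = 1)
    (herg : ∃ k : ℕ, ∀ i j, 0 < (P ^ k) i j)
    (w : Fin n → ℝ)
    (hw1 : ∑ i, w i = 1) (hwpos : ∀ i, 0 < w i)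
    (hwP : ∀ j, ∑ i, w i * P i j = w j)
    (Δ : Matrix (Fin n) (Fin n) ℝ)
    (hΔ : ∀ i j, Δ i j = w i * ((if i = j then (1 : ℝ) else 0) - P i j))
    (L : (Fin n → ℝ) → (Fin n → ℝ) → ℝ)
    (hL : ∀ φ ψ, L φ ψ = ∑ i, ∑ j, φ i * Δ i j * ψ j)
    (M : Fin n → Fin n → ℝ)
    (hMdiag : ∀ b, M b b = 0)
    (hMstep : ∀ a b, a ≠ b → M a b = 1 + ∑ j, P a j * M j b)
    (T : Fin n → Fin n → ℝ)
    (hT : ∀ a b, T a b = M a b + M b a)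
    (a b : Fin n) (hab : a ≠ b) :
    IsLeast
      { v : ℝ | ∃ α : Fin n → ℝ, α a = 1 ∧ α b = 0 ∧
          IsGreatest
            { x : ℝ | ∃ φ ψ : Fin n → ℝ,
                φ a = 1 ∧ φ b = 0 ∧ ψ a = 1 ∧ ψ b = 0 ∧
                φ + ψ = (2 : ℝ) • α ∧ x = L φ ψ } v }
      (1 / T a b) := by
  have hP1 : P *ᵥ 1 = 1 := funext fun i => by simpa [mulVec, dotProduct] using hP1 i
  have hwP : w ᵥ* P = w := funext fun j => by simpa [vecMul, dotProduct] using hwP j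
  obtain rfl : Δ = markovLaplacian w P := by
    ext i j; simp [hΔ, markovLaplacian, one_apply]
  obtain rfl : L = fun φ ψ => φ ⬝ᵥ markovLaplacian w P *ᵥ ψ := by
    ext φ ψ; simp only [hL, dotProduct, mulVec, mul_sum, mul_assoc]
  set m : Fin n → ℝ := fun i => M i b - M i a
  have hm := markovLaplacian_mulVec_hittingTime_sub hw1 hwP hMstep a b
  have hmab : m a - m b = T a b := by simp only [m, hMdiag, hT]; ring
  have hT0 := sub_ne_zero_of_markovLaplacian_mulVec_eq hP0 hwpos hP1 hwP hab hm
  have : Nonempty (Fin n) := ⟨a⟩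
  obtain ⟨x, hx⟩ := exists_vecMul_markovLaplacian_eq hP0 hP1 herg hwpos hwP
    (y := Pi.single a 1 - Pi.single b 1) (by simp [sum_sub_distrib])
  have hxab : x a - x b = m a - m b := by
    rw [← dotProduct_single_sub_single, ← hm, dotProduct_mulVec, hx, dotProduct_comm,
      dotProduct_single_sub_single]
  obtain ⟨ψ₀, hψa, hψb, hψ⟩ :=
    exists_normalized_mulVec_eq (markovLaplacian_mulVec_one hP1) hm hT0
  obtain ⟨φ₀, hφa, hφb, hφ⟩ := exists_normalized_mulVec_eq
    (by rw [mulVec_transpose, one_vecMul_markovLaplacian hwP]) (by rw [mulVec_transpose, hx])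
    (hxab ▸ hT0)
  rw [hxab, mulVec_transpose] at hφ
  rw [← hmab, one_div]
  exact isLeast_minimax_of_vecMul_eq_of_mulVec_eq
    (dotProduct_markovLaplacian_mulVec_nonneg hP0 (fun i => (hwpos i).le) hP1 hwP)
    hφa hφb hψa hψb hφ hψ
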